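/- arXiv:2012.00450 — 2 statements merged into one kernel-verified Lean document; each statement's English description precedes it below -/
import Mathlib

section
/- The main identity for generalized trigonometric functions: for all z ∈ ℂ, c(z)³ + s(z)³ + d(z)³ − 3·c(z)·s(z)·d(z) = 1. -/
open Complex

noncomputable def ζ₁ : ℂ := 1
noncomputable def ζ₂ : ℂ := (-1 + Complex.I * Real.sqrt 3) / 2
noncomputable def ζ₃ : ℂ := (-1 - Complex.I * Real.sqrt 3) / 2

noncomputable def c (z : ℂ) : ℂ :=
  (Complex.exp (z * ζ₁) + Complex.exp (z * ζ₂) + Complex.exp (z * ζ₃)) / 3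
noncomputable def s (z : ℂ) : ℂ :=
  (ζ₁⁻¹ * Complex.exp (z * ζ₁) + ζ₂⁻¹ * Complex.exp (z * ζ₂) + ζ₃⁻¹ * Complex.exp (z * ζ₃)) / 3
noncomputable def d (z : ℂ) : ℂ :=
  (ζ₁⁻¹ ^ 2 * Complex.exp (z * ζ₁) + ζ₂⁻¹ ^ 2 * Complex.exp (z * ζ₂) + ζ₃⁻¹ ^ 2 * Complex.exp (z * ζ₃)) / 3

theorem main_identity (z : ℂ) :
    c z ^ 3 + s z ^ 3 + d z ^ 3 - 3 * c z * s z * d z = 1 := by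
  have ht : ((Real.sqrt 3 : ℝ) : ℂ) ^ 2 = 3 := by
    rw [← Complex.ofReal_pow, Real.sq_sqrt (by norm_num : (3:ℝ) ≥ 0)]
    norm_num
  have h23 : ζ₂ * ζ₃ = 1 := by
    unfold ζ₂ ζ₃
    linear_combination (-Complex.I ^ 2 / 4) * ht + (-(3:ℂ)/4) * Complex.I_sq
  have hww : ζ₂ ^ 2 + ζ₂ + 1 = 0 := by
    unfold ζ₂
    linear_combination (Complex.I ^ 2 / 4) * ht + ((3:ℂ)/4) * Complex.I_sq
  have h32 : ζ₃ = ζ₂ ^ 2 := by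
    unfold ζ₂ ζ₃
    linear_combination (-Complex.I ^ 2 / 4) * ht + (-(3:ℂ)/4) * Complex.I_sq
  have h2 : ζ₂⁻¹ = ζ₃ := inv_eq_of_mul_eq_one_right h23
  have h3 : ζ₃⁻¹ = ζ₂ := inv_eq_of_mul_eq_one_right (by rw [mul_comm]; exact h23)
  have h1 : ζ₁⁻¹ = 1 := by unfold ζ₁; simp
  have hsum0 : z * ζ₁ + z * ζ₂ + z * ζ₃ = 0 := by unfold ζ₁ ζ₂ ζ₃; ring
  have habe : Complex.exp (z * ζ₁) * Complex.exp (z * ζ₂) * Complex.exp (z * ζ₃) = 1 := by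
    rw [← Complex.exp_add, ← Complex.exp_add, hsum0, Complex.exp_zero]
  unfold c s d
  rw [h1, h2, h3]
  set a := Complex.exp (z * ζ₁) with ha
  set b := Complex.exp (z * ζ₂) with hb
  set e := Complex.exp (z * ζ₃) with he
  rw [h32]
  set w := ζ₂ with hw
  linear_combination habe + ((1/27 : ℂ)*e^3 + (-1/27 : ℂ)*e^3*w + (-1/27 : ℂ)*e^3*w^3 + (1/27 : ℂ)*e^3*w^4 + (1/9 : ℂ)*b*e^2 + (-1/9 : ℂ)*b*e^2*w + (-1/9 : ℂ)*b*e^2*w^5 + (1/9 : ℂ)*b*e^2*w^6 + (1/9 : ℂ)*b^2*e + (-1/9 : ℂ)*b^2*e*w + (1/9 : ℂ)*b^2*e*w^3 + (-2/9 : ℂ)*b^2*e*w^4 + (1/9 : ℂ)*b^2*e*w^5 + (-1/9 : ℂ)*b^2*e*w^7 + (1/9 : ℂ)*b^2*e*w^8 + (1/27 : ℂ)*b^3 + (-1/27 : ℂ)*b^3*w + (1/27 : ℂ)*b^3*w^3 + (-1/27 : ℂ)*b^3*w^4 + (-1/27 : ℂ)*b^3*w^6 + (1/27 : ℂ)*b^3*w^7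 + (-1/27 : ℂ)*b^3*w^9 + (1/27 : ℂ)*b^3*w^10 + (1/9 : ℂ)*a*e^2 + (-2/9 : ℂ)*a*e^2*w + (1/9 : ℂ)*a*e^2*w^2 + (-7/9 : ℂ)*a*b*e + (2/3 : ℂ)*a*b*e*w + (-1/9 : ℂ)*a*b*e*w^2 + (-1/3 : ℂ)*a*b*e*w^3 + (2/9 : ℂ)*a*b*e*w^4 + (1/9 : ℂ)*a*b^2 + (-1/9 : ℂ)*a*b^2*w + (-1/9 : ℂ)*a*b^2*w^2 + (2/9 : ℂ)*a*b^2*w^3 + (-1/9 : ℂ)*a*b^2*w^4 + (-1/9 : ℂ)*a*b^2*w^5 + (1/9 : ℂ)*a*b^2*w^6) * hww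
end

section
/- The addition formula for c: for all z, w ∈ ℂ, c(z+w) = c(z)c(w) + s(z)d(w) + d(z)s(w). -/
open Complex

lemma ht : (Real.sqrt 3 : ℂ) ^ 2 = 3 := by
  norm_cast
  rw [Real.sq_sqrt] ; norm_num

lemma hIs : (Complex.I * (Real.sqrt 3 : ℂ)) ^ 2 = -3 := by
  rw [mul_pow, Complex.I_sq, ht]; ring

lemma hmul23 : ζ₂ * ζ₃ = 1 := by
  unfold ζ₂ ζ₃
  linear_combination (-1/4 : ℂ) * hIs

lemma hinv2 : ζ₂⁻¹ = ζ₃ := by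
  rw [inv_eq_iff_eq_inv, eq_comm, inv_eq_iff_eq_inv] at *
  exact (eq_inv_of_mul_eq_one_left (by rw [mul_comm]; exact hmul23))

lemma hinv3 : ζ₃⁻¹ = ζ₂ :=
  inv_eq_of_mul_eq_one_right (by rw [mul_comm]; exact hmul23)

lemma hsum : ζ₂ + ζ₃ = -1 := by
  unfold ζ₂ ζ₃; ring


lemma hquad : ζ₂ ^ 2 + ζ₂ + 1 = 0 := by
  unfold ζ₂
  linear_combination (1/4 : ℂ) * hIs

lemma h3 : ζ₃ = -1 - ζ₂ := by unfold ζ₂ ζ₃; ring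

theorem addition_c (z w : ℂ) :
    c (z + w) = c z * c w + s z * d w + d z * s w := by
  unfold c s d ζ₁
  rw [hinv2, hinv3, h3]
  simp only [add_mul, Complex.exp_add, inv_one, mul_one]
  linear_combination ((2/9 : ℂ)*Complex.exp (z*(-1-ζ₂))*Complex.exp (w*(-1-ζ₂)) + (-1/9 : ℂ)*Complex.exp (z*(-1-ζ₂))*Complex.exp (w*ζ₂) + (-1/9 : ℂ)*Complex.exp (z*(-1-ζ₂))*Complex.exp w + (-1/9 : ℂ)*Complex.exp (z*ζ₂)*Complex.exp (w*(-1-ζ₂)) + (4/9 : ℂ)*Complex.exp (z*ζ₂)*Complex.exp (w*ζ₂) + (-1/9 : ℂ)*Complex.exp (z*ζ₂)*Complex.exp w + (-1/9 : ℂ)*Complex.exp z*Complex.exp (w*(-1-ζ₂)) + (-1/9 : ℂ)*Complex.exp z*Complex.exp (w*ζ₂) + (-2/9 : ℂ)*ζ₂*Complex.exp (z*(-1-ζ₂))*Complex.exp (w*(-1-ζ₂)) + (2/9 : ℂ)*ζ₂*Complex.exp (z*ζ₂)*Complex.exp (w*ζ₂)) * hquad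
end
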